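/- Let w : ℝ²\{0} → ℝ be defined by w(x) = |x|² v(x/|x|²) where v : ℝ² → ℝ is C². Then for x ≠ 0, Δw(x) = 4 v(i(x)) - 4⟨∇v(i(x)), i(x)⟩ + |x|⁻² Δv(i(x)), where i(x) = x/|x|². -/

import Mathlib

/-!
Write `w = N · (v ∘ i)` with `N(x) = |x|²`. The product rule gives
`Δw = N Δ(v ∘ i) + 2 ⟨∇N, ∇(v ∘ i)⟩ + 4 v ∘ i`. The inversion is harmonic and anticonformal with
factor `|x|⁻²`, so the mixed second derivatives of `v` cancel and `Δ(v ∘ i) = |x|⁻⁴ (Δv) ∘ i`.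
Finally `⟨∇N, ∇(v ∘ i)⟩ = ⟨∇v ∘ i, Di(x) 2x⟩` and `Di(x) x = -i(x)` because `i` is homogeneous of
degree `-1`.
-/

/-- First partial derivative (flat, on ℝ²). -/
noncomputable def pd1 (f : ℝ × ℝ → ℝ) (x : ℝ × ℝ) : ℝ := fderiv ℝ f x (1, 0)

/-- Second partial derivative (flat, on ℝ²). -/
noncomputable def pd2 (f : ℝ × ℝ → ℝ) (x : ℝ × ℝ) : ℝ := fderiv ℝ f x (0, 1)

/-- Flat Laplacian on ℝ². -/
noncomputable def lap (f : ℝ × ℝ → ℝ) (x : ℝ × ℝ) : ℝ := pd1 (pd1 f) x + pd2 (pd2 f) x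

/-- Planar inversion `i(x) = x / |x|²`. -/
noncomputable def inv2 (x : ℝ × ℝ) : ℝ × ℝ :=
  (x.1 / (x.1 ^ 2 + x.2 ^ 2), x.2 / (x.1 ^ 2 + x.2 ^ 2))

open Filter Topology

variable {E F G : Type*} [NormedAddCommGroup E] [NormedSpace ℝ E] [NormedAddCommGroup F]
  [NormedSpace ℝ F] [NormedAddCommGroup G] [NormedSpace ℝ G]

theorem ContDiffAt.eventually_differentiableAt {n : WithTop ℕ∞} {f : E → F} {x : E}
    (hf : ContDiffAt ℝ n f x) (hn : 1 ≤ n) : ∀ᶠ y in 𝓝 x, DifferentiableAt ℝ f y :=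
  ((hf.of_le hn).eventually (by simp)).mono fun _ hy => hy.differentiableAt one_ne_zero

theorem ContDiffAt.differentiableAt_fderiv {n : WithTop ℕ∞} {f : E → F} {x : E}
    (hf : ContDiffAt ℝ n f x) (hn : 2 ≤ n) : DifferentiableAt ℝ (fderiv ℝ f) x :=
  (hf.fderiv_right (m := 1) hn).differentiableAt one_ne_zero

theorem fderiv_fderiv_apply_eq {f : E → F} {x : E} (hf : DifferentiableAt ℝ (fderiv ℝ f) x)
    (e e' : E) : fderiv ℝ (fun y => fderiv ℝ f y e) x e' = fderiv ℝ (fderiv ℝ f) x e' e := by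
  rw [fderiv_clm_apply hf (differentiableAt_const e)]
  simp

theorem fderiv_fderiv_comp_apply {v : F → G} {g : E → F} {x : E} (e : E)
    (hv : ContDiffAt ℝ 2 v (g x)) (hg : ContDiffAt ℝ 2 g x) :
    fderiv ℝ (fun y => fderiv ℝ (fun z => v (g z)) y e) x e =
      fderiv ℝ (fderiv ℝ v) (g x) (fderiv ℝ g x e) (fderiv ℝ g x e) +
        fderiv ℝ v (g x) (fderiv ℝ (fun y => fderiv ℝ g y e) x e) := by
  have hv' : ∀ᶠ y in 𝓝 x, DifferentiableAt ℝ v (g y) :=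
    hg.continuousAt.eventually (hv.eventually_differentiableAt one_le_two)
  have hchain : (fun y => fderiv ℝ (fun z => v (g z)) y e) =ᶠ[𝓝 x]
      fun y => fderiv ℝ v (g y) (fderiv ℝ g y e) := by
    filter_upwards [hv', hg.eventually_differentiableAt one_le_two] with y hvy hgy
    exact congrArg (· e) (fderiv_comp y hvy hgy)
  have H : HasFDerivAt (fun y => fderiv ℝ v (g y) (fderiv ℝ g y e)) _ x :=
    ((hv.differentiableAt_fderiv le_rfl).hasFDerivAt.comp x
      (hg.differentiableAt two_ne_zero).hasFDerivAt).clm_apply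
      ((hg.differentiableAt_fderiv le_rfl).clm_apply (differentiableAt_const e)).hasFDerivAt
  rw [hchain.fderiv_eq, H.fderiv]
  simp [add_comm]

theorem fderiv_fderiv_mul_apply {𝔸 : Type*} [NormedCommRing 𝔸] [NormedAlgebra ℝ 𝔸]
    {f g : E → 𝔸} {x : E} (e : E) (hf : ContDiffAt ℝ 2 f x) (hg : ContDiffAt ℝ 2 g x) :
    fderiv ℝ (fun y => fderiv ℝ (fun z => f z * g z) y e) x e =
      f x * fderiv ℝ (fun y => fderiv ℝ g y e) x e
        + 2 * (fderiv ℝ f x e * fderiv ℝ g x e)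
        + g x * fderiv ℝ (fun y => fderiv ℝ f y e) x e := by
  have hprod : (fun y => fderiv ℝ (fun z => f z * g z) y e) =ᶠ[𝓝 x]
      fun y => f y * fderiv ℝ g y e + g y * fderiv ℝ f y e := by
    filter_upwards [hf.eventually_differentiableAt one_le_two,
      hg.eventually_differentiableAt one_le_two] with y hfy hgy
    simp [fderiv_fun_mul hfy hgy]
  have hDf := (hf.differentiableAt_fderiv le_rfl).clm_apply (differentiableAt_const e)
  have hDg := (hg.differentiableAt_fderiv le_rfl).clm_apply (differentiableAt_const e)
  have H : HasFDerivAt (fun y => f y * fderiv ℝ g y e + g y * fderiv ℝ f y e) _ x :=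
    ((hf.differentiableAt two_ne_zero).hasFDerivAt.mul hDg.hasFDerivAt).add
      ((hg.differentiableAt two_ne_zero).hasFDerivAt.mul hDf.hasFDerivAt)
  rw [hprod.fderiv_eq, H.fderiv]
  simp only [add_apply, smul_apply, smul_eq_mul]
  ring

theorem ContinuousLinearMap.apply_eq_fst_smul_add_snd_smul {R M : Type*} [Semiring R]
    [TopologicalSpace R] [AddCommMonoid M] [Module R M] [TopologicalSpace M]
    (L : R × R →L[R] M) (p : R × R) : L p = p.1 • L (1, 0) + p.2 • L (0, 1) := by
  rw [← map_smul, ← map_smul, ← map_add]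
  simp

theorem fderiv_apply_one_zero_of_hasDerivAt {f : ℝ × ℝ → F} {x : ℝ × ℝ} {d : F}
    (hf : DifferentiableAt ℝ f x) (h : HasDerivAt (fun t => f (t, x.2)) d x.1) :
    fderiv ℝ f x (1, 0) = d :=
  (hf.hasFDerivAt.comp_hasDerivAt x.1
    ((hasDerivAt_id x.1).prodMk (hasDerivAt_const x.1 x.2))).unique h

theorem fderiv_apply_zero_one_of_hasDerivAt {f : ℝ × ℝ → F} {x : ℝ × ℝ} {d : F}
    (hf : DifferentiableAt ℝ f x) (h : HasDerivAt (fun t => f (x.1, t)) d x.2) :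
    fderiv ℝ f x (0, 1) = d :=
  (hf.hasFDerivAt.comp_hasDerivAt x.2
    ((hasDerivAt_const x.2 x.1).prodMk (hasDerivAt_id x.2))).unique h

theorem fderiv_comp_apply_eq_pd {v : ℝ × ℝ → ℝ} {g : ℝ × ℝ → ℝ × ℝ} {x : ℝ × ℝ}
    (hv : DifferentiableAt ℝ v (g x)) (hg : DifferentiableAt ℝ g x) (p : ℝ × ℝ) :
    fderiv ℝ (fun y => v (g y)) x p =
      (fderiv ℝ g x p).1 * pd1 v (g x) + (fderiv ℝ g x p).2 * pd2 v (g x) := by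
  rw [fderiv_fun_comp x hv hg, ContinuousLinearMap.comp_apply,
    ContinuousLinearMap.apply_eq_fst_smul_add_snd_smul, smul_eq_mul, smul_eq_mul, pd1, pd2]

theorem lap_eq (f : ℝ × ℝ → ℝ) (x : ℝ × ℝ) :
    lap f x = fderiv ℝ (fun y => fderiv ℝ f y (1, 0)) x (1, 0)
      + fderiv ℝ (fun y => fderiv ℝ f y (0, 1)) x (0, 1) := rfl

theorem lap_mul {f g : ℝ × ℝ → ℝ} {x : ℝ × ℝ} (hf : ContDiffAt ℝ 2 f x)
    (hg : ContDiffAt ℝ 2 g x) :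
    lap (fun y => f y * g y) x =
      f x * lap g x + 2 * (pd1 f x * pd1 g x + pd2 f x * pd2 g x) + g x * lap f x := by
  simp only [lap_eq, fderiv_fderiv_mul_apply _ hf hg, pd1, pd2]
  ring

/-- The hypotheses say that the rows of the Jacobian of `g` at `x` are orthogonal and of equal
length, which makes the mixed second derivatives of `v` cancel. -/
theorem lap_comp_of_conformal {v : ℝ × ℝ → ℝ} {g : ℝ × ℝ → ℝ × ℝ} {x a b : ℝ × ℝ}
    (hv : ContDiffAt ℝ 2 v (g x)) (hg : ContDiffAt ℝ 2 g x)
    (ha : fderiv ℝ g x (1, 0) = a) (hb : fderiv ℝ g x (0, 1) = b)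
    (horth : a.1 * a.2 + b.1 * b.2 = 0) (hscale : a.2 ^ 2 + b.2 ^ 2 = a.1 ^ 2 + b.1 ^ 2)
    (hharm : fderiv ℝ (fun y => fderiv ℝ g y (1, 0)) x (1, 0)
      + fderiv ℝ (fun y => fderiv ℝ g y (0, 1)) x (0, 1) = 0) :
    lap (fun y => v (g y)) x = (a.1 ^ 2 + b.1 ^ 2) * lap v (g x) := by
  have hDv := hv.differentiableAt_fderiv le_rfl
  rw [lap_eq, fderiv_fderiv_comp_apply _ hv hg, fderiv_fderiv_comp_apply _ hv hg,
    add_add_add_comm, ← map_add, hharm, map_zero, add_zero, lap_eq,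
    fderiv_fderiv_apply_eq hDv, fderiv_fderiv_apply_eq hDv, ha, hb]
  set B := fderiv ℝ (fderiv ℝ v) (g x)
  rw [B.apply_eq_fst_smul_add_snd_smul a, B.apply_eq_fst_smul_add_snd_smul b]
  simp only [add_apply, smul_apply, smul_eq_mul]
  rw [(B (1, 0)).apply_eq_fst_smul_add_snd_smul a, (B (0, 1)).apply_eq_fst_smul_add_snd_smul a,
    (B (1, 0)).apply_eq_fst_smul_add_snd_smul b, (B (0, 1)).apply_eq_fst_smul_add_snd_smul b]
  simp only [smul_eq_mul]
  linear_combination (B (1, 0) (0, 1) + B (0, 1) (1, 0)) * horth + B (0, 1) (0, 1) * hscale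

theorem fderiv_fst_sq_add_snd_sq_apply (y p : ℝ × ℝ) :
    fderiv ℝ (fun y : ℝ × ℝ => y.1 ^ 2 + y.2 ^ 2) y p = 2 * (y.1 * p.1 + y.2 * p.2) := by
  have H : HasFDerivAt (fun y : ℝ × ℝ => y.1 ^ 2 + y.2 ^ 2) _ y :=
    ((hasFDerivAt_fst (𝕜 := ℝ) (p := y)).pow 2).add ((hasFDerivAt_snd (𝕜 := ℝ) (p := y)).pow 2)
  rw [H.fderiv]
  simp only [add_apply, smul_apply, nsmul_eq_mul, ContinuousLinearMap.coe_fst',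
    ContinuousLinearMap.coe_snd', smul_eq_mul]
  ring

theorem lap_fst_sq_add_snd_sq (x : ℝ × ℝ) : lap (fun y : ℝ × ℝ => y.1 ^ 2 + y.2 ^ 2) x = 4 := by
  norm_num [lap_eq, fderiv_fst_sq_add_snd_sq_apply, fderiv_const_mul, fderiv_fst, fderiv_snd]

theorem fst_sq_add_snd_sq_ne_zero {x : ℝ × ℝ} (hx : x ≠ 0) : x.1 ^ 2 + x.2 ^ 2 ≠ 0 := by
  contrapose! hx
  ext <;> simp only [Prod.fst_zero, Prod.snd_zero] <;> nlinarith [sq_nonneg x.1, sq_nonneg x.2]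

theorem contDiffAt_inv2 {n : WithTop ℕ∞} {x : ℝ × ℝ} (hx : x ≠ 0) : ContDiffAt ℝ n inv2 x := by
  have := fst_sq_add_snd_sq_ne_zero hx
  unfold inv2
  fun_prop (disch := assumption)

theorem fderiv_inv2_apply_one_zero {y : ℝ × ℝ} (hy : y ≠ 0) :
    fderiv ℝ inv2 y (1, 0) =
      ((y.2 ^ 2 - y.1 ^ 2) / (y.1 ^ 2 + y.2 ^ 2) ^ 2,
        -(2 * y.1 * y.2) / (y.1 ^ 2 + y.2 ^ 2) ^ 2) := by
  have hN := fst_sq_add_snd_sq_ne_zero hy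
  have hden : HasDerivAt (fun t => t ^ 2 + y.2 ^ 2) (2 * y.1) y.1 := by
    simpa using (hasDerivAt_pow 2 y.1).add_const (y.2 ^ 2)
  refine fderiv_apply_one_zero_of_hasDerivAt
    ((contDiffAt_inv2 (n := 1) hy).differentiableAt one_ne_zero)
    ((((hasDerivAt_id y.1).div hden hN).prodMk
      ((hasDerivAt_const y.1 y.2).div hden hN)).congr_deriv ?_)
  ext <;> simp only [id] <;> field_simp <;> ring

theorem fderiv_inv2_apply_zero_one {y : ℝ × ℝ} (hy : y ≠ 0) :
    fderiv ℝ inv2 y (0, 1) =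
      (-(2 * y.1 * y.2) / (y.1 ^ 2 + y.2 ^ 2) ^ 2,
        (y.1 ^ 2 - y.2 ^ 2) / (y.1 ^ 2 + y.2 ^ 2) ^ 2) := by
  have hN := fst_sq_add_snd_sq_ne_zero hy
  have hden : HasDerivAt (fun t => y.1 ^ 2 + t ^ 2) (2 * y.2) y.2 := by
    simpa using (hasDerivAt_pow 2 y.2).const_add (y.1 ^ 2)
  refine fderiv_apply_zero_one_of_hasDerivAt
    ((contDiffAt_inv2 (n := 1) hy).differentiableAt one_ne_zero)
    ((((hasDerivAt_const y.2 y.1).div hden hN).prodMk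
      ((hasDerivAt_id y.2).div hden hN)).congr_deriv ?_)
  ext <;> simp only [id] <;> field_simp <;> ring

theorem laplacian_inv2_eq_zero {x : ℝ × ℝ} (hx : x ≠ 0) :
    fderiv ℝ (fun y => fderiv ℝ inv2 y (1, 0)) x (1, 0)
      + fderiv ℝ (fun y => fderiv ℝ inv2 y (0, 1)) x (0, 1) = 0 := by
  have hN := fst_sq_add_snd_sq_ne_zero hx
  have hN2 := pow_ne_zero 2 hN
  have h₁ : (fun y => fderiv ℝ inv2 y (1, 0)) =ᶠ[𝓝 x] fun y : ℝ × ℝ =>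
      ((y.2 ^ 2 - y.1 ^ 2) / (y.1 ^ 2 + y.2 ^ 2) ^ 2,
        -(2 * y.1 * y.2) / (y.1 ^ 2 + y.2 ^ 2) ^ 2) :=
    (eventually_ne_nhds hx).mono fun y hy => fderiv_inv2_apply_one_zero hy
  have h₂ : (fun y => fderiv ℝ inv2 y (0, 1)) =ᶠ[𝓝 x] fun y : ℝ × ℝ =>
      (-(2 * y.1 * y.2) / (y.1 ^ 2 + y.2 ^ 2) ^ 2,
        (y.1 ^ 2 - y.2 ^ 2) / (y.1 ^ 2 + y.2 ^ 2) ^ 2) :=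
    (eventually_ne_nhds hx).mono fun y hy => fderiv_inv2_apply_zero_one hy
  have hden₁ : HasDerivAt (fun t => (t ^ 2 + x.2 ^ 2) ^ 2)
      (2 * (x.1 ^ 2 + x.2 ^ 2) * (2 * x.1)) x.1 := by
    simpa using ((hasDerivAt_pow 2 x.1).add_const (x.2 ^ 2)).fun_pow 2
  have hden₂ : HasDerivAt (fun t => (x.1 ^ 2 + t ^ 2) ^ 2)
      (2 * (x.1 ^ 2 + x.2 ^ 2) * (2 * x.2)) x.2 := by
    simpa using ((hasDerivAt_pow 2 x.2).const_add (x.1 ^ 2)).fun_pow 2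
  rw [h₁.fderiv_eq, h₂.fderiv_eq,
    fderiv_apply_one_zero_of_hasDerivAt (by fun_prop (disch := assumption))
      ((((hasDerivAt_pow 2 x.1).const_sub (x.2 ^ 2)).div hden₁ hN2).prodMk
        ((((hasDerivAt_id x.1).const_mul 2).mul_const x.2).neg.div hden₁ hN2)),
    fderiv_apply_zero_one_of_hasDerivAt (by fun_prop (disch := assumption))
      ((((hasDerivAt_id x.2).const_mul (2 * x.1)).neg.div hden₂ hN2).prodMk
        (((hasDerivAt_pow 2 x.2).const_sub (x.1 ^ 2)).div hden₂ hN2))]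
  ext <;>
    simp only [Nat.cast_ofNat, Nat.add_one_sub_one, pow_one, neg_mul, mul_one, id_eq,
      Pi.neg_apply, sub_neg_eq_add, Prod.mk_add_mk, Prod.fst_zero, Prod.snd_zero] <;>
    field_simp <;> ring

/-- For `w(x) = |x|² v(x/|x|²)` with `v` of class `C²`, for `x ≠ 0`:
`Δw(x) = 4 v(i(x)) - 4⟨∇v(i(x)), i(x)⟩ + |x|⁻² Δv(i(x))`. -/
theorem lap_of_inverted_weight (v : ℝ × ℝ → ℝ) (hv : ContDiff ℝ 2 v)
    (x : ℝ × ℝ) (hx : x ≠ 0) :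
    lap (fun y => (y.1 ^ 2 + y.2 ^ 2) * v (inv2 y)) x =
      4 * v (inv2 x)
        - 4 * (pd1 v (inv2 x) * (inv2 x).1 + pd2 v (inv2 x) * (inv2 x).2)
        + (x.1 ^ 2 + x.2 ^ 2)⁻¹ * lap v (inv2 x) := by
  have hN := fst_sq_add_snd_sq_ne_zero hx
  have hi : ContDiffAt ℝ 2 inv2 x := contDiffAt_inv2 hx
  rw [lap_mul (g := fun y => v (inv2 y)) (by fun_prop) (hv.contDiffAt.comp x hi),
    lap_comp_of_conformal hv.contDiffAt hi (fderiv_inv2_apply_one_zero hx)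
      (fderiv_inv2_apply_zero_one hx) (by field_simp; ring) (by field_simp; ring)
      (laplacian_inv2_eq_zero hx), lap_fst_sq_add_snd_sq]
  simp only [pd1, pd2, fderiv_fst_sq_add_snd_sq_apply,
    fderiv_comp_apply_eq_pd (hv.differentiable two_ne_zero _) (hi.differentiableAt two_ne_zero),
    fderiv_inv2_apply_one_zero hx, fderiv_inv2_apply_zero_one hx]
  simp only [inv2]
  field_simp
  ring
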